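/- Let P be the uniform distribution on [a,b] with a < b, and let β = {a,b}. For every n ∈ ℕ with n ≥ 2, the n-th conditional unconstrained quantization error for P with respect to β equals (b−a)²/(12(n−1)²), and this infimum is attained by the set {a + (j−1)(b−a)/(n−1) : 1 ≤ j ≤ n}. -/

import Mathlib

/-!
On a gap `[c, d]` between consecutive points of a finite set `s`, the squared distance to `s` is
`min ((x - c)², (x - d)²)`, whose integral is `(d - c)³ / 12`. If at most `m` points of `s` lie
strictly between `c` and `d`, splitting at one of them and Radon's inequality
`(x + y)³ / (p + q)² ≤ x³ / p² + y³ / q²` give by induction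
`∫ x in c..d, minSqDist s x ≥ (d - c)³ / (12 (m + 1)²)`. With `m = n - 2` this is the lower
bound, and the equally spaced grid, whose `n - 1` gaps all have length `(b - a) / (n - 1)`,
attains it.
-/

open MeasureTheory Set Filter

/-- The uniform distribution on `[a, b]`: normalized Lebesgue measure restricted to `[a, b]`. -/
noncomputable def uniformOn (a b : ℝ) : Measure ℝ :=
  (ENNReal.ofReal (b - a))⁻¹ • volume.restrict (Set.Icc a b)

/-- The distortion error of a set `s` of points for the measure `P`. -/
noncomputable def distortion (P : Measure ℝ) (s : Set ℝ) : ℝ :=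
  ∫ x, sInf ((fun a => (x - a) ^ 2) '' s) ∂P

/-- The `n`-th conditional (unconstrained) quantization error for `P` with respect to
the conditional set `β`. -/
noncomputable def condQuantError (P : Measure ℝ) (β : Set ℝ) (n : ℕ) : ℝ :=
  sInf { v : ℝ | ∃ α : Set ℝ, α.Finite ∧ α.ncard ≤ n - β.ncard ∧ v = distortion P (α ∪ β) }

-- Weighted Jensen for `z ↦ z³` with weights `p, q` at the points `x / p, y / q`.
lemma add_pow_three_div_add_sq_le {x y p q : ℝ} (hx : 0 ≤ x) (hy : 0 ≤ y) (hp : 0 < p)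
    (hq : 0 < q) :
    (x + y) ^ 3 / (p + q) ^ 2 ≤ x ^ 3 / p ^ 2 + y ^ 3 / q ^ 2 := by
  rw [div_add_div _ _ (by positivity) (by positivity),
    div_le_div_iff₀ (by positivity) (by positivity)]
  nlinarith [mul_nonneg (mul_nonneg (mul_pos hp hq).le (add_nonneg hx hy))
      (sq_nonneg (x * q - y * p)),
    mul_nonneg (sq_nonneg (x * q - y * p))
      (add_nonneg (mul_nonneg hy (sq_nonneg p)) (mul_nonneg hx (sq_nonneg q)))]

noncomputable def minSqDist (s : Set ℝ) (x : ℝ) : ℝ :=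
  sInf ((fun a => (x - a) ^ 2) '' s)

section minSqDist

variable {s : Set ℝ}

lemma minSqDist_le (hs : s.Finite) {t : ℝ} (ht : t ∈ s) (x : ℝ) :
    minSqDist s x ≤ (x - t) ^ 2 :=
  csInf_le (hs.image _).bddBelow ⟨t, ht, rfl⟩

lemma exists_minSqDist_eq (hs : s.Finite) (hne : s.Nonempty) (x : ℝ) :
    ∃ t ∈ s, minSqDist s x = (x - t) ^ 2 := by
  obtain ⟨t, ht, h⟩ := (hne.image (fun a => (x - a) ^ 2)).csInf_mem (hs.image _)
  exact ⟨t, ht, h.symm⟩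

lemma continuous_minSqDist (hs : s.Finite) (hne : s.Nonempty) : Continuous (minSqDist s) := by
  have hne' : hs.toFinset.Nonempty := hs.toFinset_nonempty.2 hne
  have : minSqDist s = fun x => hs.toFinset.inf' hne' fun t => (x - t) ^ 2 := by
    ext x
    rw [Finset.inf'_eq_csInf_image, hs.coe_toFinset, minSqDist]
  rw [this]
  fun_prop

lemma minSqDist_eq_min_of_gap (hs : s.Finite) {c d : ℝ} (hc : c ∈ s) (hd : d ∈ s)
    (hgap : s ∩ Ioo c d = ∅) {x : ℝ} (hx : x ∈ Icc c d) :
    minSqDist s x = min ((x - c) ^ 2) ((x - d) ^ 2) := by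
  refine le_antisymm (le_min (minSqDist_le hs hc x) (minSqDist_le hs hd x)) ?_
  obtain ⟨t, ht, he⟩ := exists_minSqDist_eq hs ⟨c, hc⟩ x
  rw [he]
  have htn : t ∉ Ioo c d := fun h => hgap.subset ⟨ht, h⟩
  rcases le_or_gt t c with htc | hct
  · exact (min_le_left _ _).trans (by nlinarith [hx.1, hx.2])
  · have hdt : d ≤ t := not_lt.1 fun htd => htn ⟨hct, htd⟩
    exact (min_le_right _ _).trans (by nlinarith [hx.1, hx.2])

lemma integral_min_sq_sub_sq {c d : ℝ} (hcd : c ≤ d) :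
    ∫ x in c..d, min ((x - c) ^ 2) ((x - d) ^ 2) = (d - c) ^ 3 / 12 := by
  obtain ⟨m, hm⟩ : ∃ m, m = (c + d) / 2 := ⟨_, rfl⟩
  have hcont : Continuous fun x : ℝ => min ((x - c) ^ 2) ((x - d) ^ 2) := by fun_prop
  have left : ∫ x in c..m, min ((x - c) ^ 2) ((x - d) ^ 2) = ∫ x in c..m, (x - c) ^ 2 := by
    refine intervalIntegral.integral_congr fun x hx => min_eq_left ?_
    rw [uIcc_of_le (by linarith)] at hx
    nlinarith [mul_nonneg (sub_nonneg.2 hcd) (sub_nonneg.2 hx.2)]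
  have right : ∫ x in m..d, min ((x - c) ^ 2) ((x - d) ^ 2) = ∫ x in m..d, (x - d) ^ 2 := by
    refine intervalIntegral.integral_congr fun x hx => min_eq_right ?_
    rw [uIcc_of_le (by linarith)] at hx
    nlinarith [mul_nonneg (sub_nonneg.2 hcd) (sub_nonneg.2 hx.1)]
  rw [← intervalIntegral.integral_add_adjacent_intervals (b := m)
    (hcont.intervalIntegrable c m) (hcont.intervalIntegrable m d), left, right,
    intervalIntegral.integral_comp_sub_right (fun x => x ^ 2),
    intervalIntegral.integral_comp_sub_right (fun x => x ^ 2)]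
  simp only [integral_pow]
  subst hm
  ring

lemma integral_minSqDist_of_gap (hs : s.Finite) {c d : ℝ} (hcd : c ≤ d) (hc : c ∈ s)
    (hd : d ∈ s) (hgap : s ∩ Ioo c d = ∅) :
    ∫ x in c..d, minSqDist s x = (d - c) ^ 3 / 12 := by
  rw [← integral_min_sq_sub_sq hcd]
  refine intervalIntegral.integral_congr fun x hx => ?_
  rw [uIcc_of_le hcd] at hx
  exact minSqDist_eq_min_of_gap hs hc hd hgap hx

lemma integral_minSqDist_eq_sum (hs : s.Finite) {p : ℕ → ℝ} (hp : Monotone p) (k : ℕ)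
    (hmem : ∀ i ≤ k, p i ∈ s) (hgap : ∀ i < k, s ∩ Ioo (p i) (p (i + 1)) = ∅) :
    ∫ x in p 0..p k, minSqDist s x = ∑ i ∈ Finset.range k, (p (i + 1) - p i) ^ 3 / 12 := by
  induction k with
  | zero => simp
  | succ k ih =>
    have hcont := continuous_minSqDist hs ⟨p 0, hmem 0 (Nat.zero_le _)⟩
    rw [← intervalIntegral.integral_add_adjacent_intervals (hcont.intervalIntegrable _ _)
      (hcont.intervalIntegrable _ _), Finset.sum_range_succ,
      ih (fun i hi => hmem i (Nat.le_succ_of_le hi)) (fun i hi => hgap i (Nat.lt_succ_of_lt hi)),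
      integral_minSqDist_of_gap hs (hp k.le_succ) (hmem k k.le_succ) (hmem _ le_rfl)
        (hgap k k.lt_succ_self)]

lemma ncard_inter_Ioo_add_ncard_inter_Ioo_lt (hs : s.Finite) {c t d : ℝ}
    (ht : t ∈ s ∩ Ioo c d) :
    (s ∩ Ioo c t).ncard + (s ∩ Ioo t d).ncard < (s ∩ Ioo c d).ncard := by
  have hdisj : Disjoint (s ∩ Ioo c t) (s ∩ Ioo t d) :=
    disjoint_left.2 fun x hx hx' => (hx.2.2.trans hx'.2.1).false
  have hssub : s ∩ Ioo c t ∪ s ∩ Ioo t d ⊂ s ∩ Ioo c d := by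
    refine ssubset_of_subset_not_subset ?_ fun h => ?_
    · rintro x (⟨hx, hcx, hxt⟩ | ⟨hx, htx, hxd⟩)
      exacts [⟨hx, hcx, hxt.trans ht.2.2⟩, ⟨hx, ht.2.1.trans htx, hxd⟩]
    · rcases h ht with ⟨-, -, h⟩ | ⟨-, h, -⟩ <;> exact h.false
  rw [← ncard_union_eq hdisj (hs.inter_of_left _) (hs.inter_of_left _)]
  exact ncard_lt_ncard hssub (hs.inter_of_left _)

lemma le_integral_minSqDist (hs : s.Finite) (m : ℕ) {c d : ℝ} (hcd : c ≤ d)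
    (hc : c ∈ s) (hd : d ∈ s) (hm : (s ∩ Ioo c d).ncard ≤ m) :
    (d - c) ^ 3 / (12 * ((m : ℝ) + 1) ^ 2) ≤ ∫ x in c..d, minSqDist s x := by
  induction m using Nat.strong_induction_on generalizing c d with
  | _ m ih =>
  rcases (s ∩ Ioo c d).eq_empty_or_nonempty with hgap | ⟨t, ht⟩
  · rw [integral_minSqDist_of_gap hs hcd hc hd hgap]
    gcongr
    nlinarith [(m.cast_nonneg : (0 : ℝ) ≤ m)]
  · have hcount := ncard_inter_Ioo_add_ncard_inter_Ioo_lt hs ht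
    set m₁ := (s ∩ Ioo c t).ncard
    set m₂ := (s ∩ Ioo t d).ncard
    have hsum : ((m₁ : ℝ) + 1) + ((m₂ : ℝ) + 1) ≤ (m : ℝ) + 1 := by
      exact_mod_cast (by omega : m₁ + 1 + (m₂ + 1) ≤ m + 1)
    rw [← intervalIntegral.integral_add_adjacent_intervals (b := t)
      ((continuous_minSqDist hs ⟨c, hc⟩).intervalIntegrable _ _)
      ((continuous_minSqDist hs ⟨c, hc⟩).intervalIntegrable _ _)]
    calc (d - c) ^ 3 / (12 * ((m : ℝ) + 1) ^ 2)
        ≤ ((t - c) + (d - t)) ^ 3 / ((m₁ + 1 : ℝ) + (m₂ + 1)) ^ 2 / 12 := by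
          rw [div_div, mul_comm, sub_add_sub_cancel']
          gcongr
      _ ≤ ((t - c) ^ 3 / (m₁ + 1 : ℝ) ^ 2 + (d - t) ^ 3 / (m₂ + 1 : ℝ) ^ 2) / 12 := by
          gcongr
          exact add_pow_three_div_add_sq_le (by linarith [ht.2.1]) (by linarith [ht.2.2])
            (by positivity) (by positivity)
      _ = (t - c) ^ 3 / (12 * ((m₁ : ℝ) + 1) ^ 2)
            + (d - t) ^ 3 / (12 * ((m₂ : ℝ) + 1) ^ 2) := by
          field_simp
      _ ≤ _ := add_le_add (ih m₁ (by omega) ht.2.1.le hc ht.1 le_rfl)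
          (ih m₂ (by omega) ht.2.2.le ht.1 hd le_rfl)

end minSqDist

section uniformOn

variable {a b : ℝ}

lemma distortion_uniformOn (hab : a ≤ b) (s : Set ℝ) :
    distortion (uniformOn a b) s = (∫ x in a..b, minSqDist s x) / (b - a) := by
  rw [distortion, uniformOn, integral_smul_measure, ENNReal.toReal_inv,
    ENNReal.toReal_ofReal (sub_nonneg.2 hab), smul_eq_mul, integral_Icc_eq_integral_Ioc,
    ← intervalIntegral.integral_of_le hab, inv_mul_eq_div]
  rfl

lemma le_distortion_uniformOn_union (hab : a < b) {α : Set ℝ} (hα : α.Finite) {m : ℕ}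
    (hm : α.ncard ≤ m) :
    (b - a) ^ 2 / (12 * ((m : ℝ) + 1) ^ 2) ≤ distortion (uniformOn a b) (α ∪ {a, b}) := by
  have hs : (α ∪ {a, b}).Finite := hα.union (toFinite _)
  have hcard : ((α ∪ {a, b}) ∩ Ioo a b).ncard ≤ m := by
    refine le_trans (ncard_le_ncard ?_ hα) hm
    rintro x ⟨hx | rfl | rfl, hax, hxb⟩
    exacts [hx, (lt_irrefl x hax).elim, (lt_irrefl x hxb).elim]
  have hlow := le_integral_minSqDist hs m hab.le (by simp) (by simp) hcard
  rw [distortion_uniformOn hab.le, le_div_iff₀ (sub_pos.2 hab)]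
  calc (b - a) ^ 2 / (12 * ((m : ℝ) + 1) ^ 2) * (b - a)
      = (b - a) ^ 3 / (12 * ((m : ℝ) + 1) ^ 2) := by ring
    _ ≤ _ := hlow

lemma distortion_uniformOn_grid (hab : a < b) {n : ℕ} (hn : 2 ≤ n) :
    distortion (uniformOn a b)
        ((fun j : ℕ => a + ((j : ℝ) - 1) * (b - a) / ((n : ℝ) - 1)) '' Icc 1 n)
      = (b - a) ^ 2 / (12 * ((n : ℝ) - 1) ^ 2) := by
  obtain ⟨k, rfl⟩ : ∃ k, n = k + 1 := ⟨n - 1, by omega⟩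
  have hk : (0 : ℝ) < k := by exact_mod_cast (by omega : 0 < k)
  simp only [Nat.cast_succ, add_sub_cancel_right]
  set δ := (b - a) / k
  set G := (fun j : ℕ => a + ((j : ℝ) - 1) * (b - a) / k) '' Icc 1 (k + 1)
  have hδ : 0 < δ := div_pos (sub_pos.2 hab) hk
  have hgrid (j : ℕ) : a + ((j : ℝ) - 1) * (b - a) / k = a + ((j : ℝ) - 1) * δ := by
    simp only [δ]; ring
  have hp : Monotone fun i : ℕ => a + i * δ := fun i j hij => by dsimp only; gcongr
  have hmem : ∀ i ≤ k, a + i * δ ∈ G := fun i hi =>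
    ⟨i + 1, ⟨by omega, by omega⟩, by simp only [δ]; push_cast; ring⟩
  have hgap : ∀ i < k, G ∩ Ioo (a + i * δ) (a + ↑(i + 1) * δ) = ∅ := by
    refine fun i _ => eq_empty_iff_forall_notMem.2 ?_
    rintro x ⟨⟨j, -, rfl⟩, hij, hji⟩
    dsimp only at hij hji
    rw [hgrid] at hij hji
    have h₁ : (i : ℝ) < j - 1 := lt_of_mul_lt_mul_right (by linarith) hδ.le
    have h₂ : (j : ℝ) - 1 < ↑(i + 1) := lt_of_mul_lt_mul_right (by linarith) hδ.le
    push_cast at h₂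
    have : i + 1 < j := by exact_mod_cast (by linarith : (i : ℝ) + 1 < j)
    have : j < i + 2 := by exact_mod_cast (by linarith : (j : ℝ) < i + 2)
    omega
  have hint := integral_minSqDist_eq_sum ((finite_Icc _ _).image _) hp k hmem hgap
  have hb : a + k * δ = b := by simp only [δ]; field_simp; ring
  simp only [Nat.cast_zero, zero_mul, add_zero, hb, Nat.cast_succ] at hint
  rw [distortion_uniformOn hab.le, hint]
  simp only [add_sub_add_left_eq_sub, ← sub_mul, add_sub_cancel_left, one_mul,
    Finset.sum_const, Finset.card_range, nsmul_eq_mul, δ]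
  field_simp

end uniformOn

/-- Conditional quantization for the uniform distribution on `[a,b]` with conditional set `{a,b}`:
the error is `(b-a)²/(12(n-1)²)`, attained by the set `{a + (j-1)(b-a)/(n-1) : 1 ≤ j ≤ n}`. -/
theorem stmt2 (a b : ℝ) (hab : a < b) (n : ℕ) (hn : 2 ≤ n) :
    condQuantError (uniformOn a b) {a, b} n = (b - a) ^ 2 / (12 * ((n : ℝ) - 1) ^ 2)
    ∧ distortion (uniformOn a b)
        ((fun j : ℕ => a + ((j : ℝ) - 1) * (b - a) / ((n : ℝ) - 1)) '' Set.Icc 1 n)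
      = (b - a) ^ 2 / (12 * ((n : ℝ) - 1) ^ 2) := by
  set G := (fun j : ℕ => a + ((j : ℝ) - 1) * (b - a) / ((n : ℝ) - 1)) '' Set.Icc 1 n
  have hgrid := distortion_uniformOn_grid hab hn
  have hpair : ({a, b} : Set ℝ).ncard = 2 := ncard_pair hab.ne
  have hendpoints : {a, b} ⊆ G := by
    have hn' : (n : ℝ) - 1 ≠ 0 := by
      have : (2 : ℝ) ≤ n := by exact_mod_cast hn
      linarith
    refine insert_subset ⟨1, ⟨le_rfl, by omega⟩, by simp⟩ (singleton_subset_iff.2 ?_)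
    exact ⟨n, ⟨by omega, le_rfl⟩, by field_simp; ring⟩
  refine ⟨IsLeast.csInf_eq ⟨?_, ?_⟩, hgrid⟩
  · refine ⟨G \ {a, b}, ((finite_Icc 1 n).image _).sdiff, ?_,
      by rw [sdiff_union_of_subset hendpoints, hgrid]⟩
    rw [ncard_sdiff hendpoints, hpair]
    gcongr
    exact (ncard_image_le (finite_Icc 1 n)).trans (by simp)
  · rintro v ⟨α, hα, hcard, rfl⟩
    rw [hpair] at hcard
    have hm : ((n - 2 : ℕ) : ℝ) + 1 = n - 1 := by push_cast [Nat.cast_sub hn]; ring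
    simpa only [hm] using le_distortion_uniformOn_union hab hα hcard
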